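/- arXiv:1712.10122 — 5 statements merged into one kernel-verified Lean document; each statement's English description precedes it below -/
import Mathlib

section
/- For any permutation π of {1,...,n} whose longest increasing subsequence has length 2 and whose longest decreasing subsequence has length s (with n = s + r, s ≥ r ≥ 1, r the number of remaining elements), the number of inversions of π is at least C(s,2) + C(r,2). -/
/-- The number of inversions of a permutation of `Fin n`:
pairs of positions `i < j` with `π i > π j`. -/
def invCount {n : ℕ} (π : Equiv.Perm (Fin n)) : ℕ :=
  (Finset.univ.filter fun p : Fin n × Fin n => p.1 < p.2 ∧ π p.2 < π p.1).card

/-- The length of the longest (strictly) increasing subsequence of `π`. -/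
noncomputable def lisLen {n : ℕ} (π : Equiv.Perm (Fin n)) : ℕ :=
  sSup {k | ∃ t : Finset (Fin n), t.card = k ∧ StrictMonoOn ⇑π ↑t}

/-- The length of the longest (strictly) decreasing subsequence of `π`. -/
noncomputable def ldsLen {n : ℕ} (π : Equiv.Perm (Fin n)) : ℕ :=
  sSup {k | ∃ t : Finset (Fin n), t.card = k ∧ StrictAntiOn ⇑π ↑t}

open Finset

section aux
variable {n : ℕ} (π : Equiv.Perm (Fin n))

lemma bddMono : BddAbove {k | ∃ t : Finset (Fin n), t.card = k ∧ StrictMonoOn ⇑π ↑t} := by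
  refine ⟨n, fun k hk => ?_⟩
  obtain ⟨t, ht, -⟩ := hk
  simpa [ht] using t.card_le_univ

lemma bddAnti : BddAbove {k | ∃ t : Finset (Fin n), t.card = k ∧ StrictAntiOn ⇑π ↑t} := by
  refine ⟨n, fun k hk => ?_⟩
  obtain ⟨t, ht, -⟩ := hk
  simpa [ht] using t.card_le_univ

lemma noChain3 (hlis : lisLen π = 2) :
    ∀ a b c : Fin n, a < b → b < c → π a < π b → π b < π c → False := by
  intro a b c hab hbc h1 h2
  have h3 : π a < π c := h1.trans h2
  have hK : StrictMonoOn ⇑π ↑({a, b, c} : Finset (Fin n)) := by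
    intro x hx y hy hxy
    simp only [coe_insert, Set.mem_insert_iff, coe_singleton, Set.mem_singleton_iff] at hx hy
    rcases hx with rfl | rfl | rfl <;> rcases hy with rfl | rfl | rfl <;>
      first
        | exact absurd hxy (lt_irrefl _)
        | assumption
        | exact absurd hxy (asymm hab)
        | exact absurd hxy (asymm hbc)
        | exact absurd hxy (asymm (hab.trans hbc))
  have hcard : ({a, b, c} : Finset (Fin n)).card = 3 := by
    have h1 : a ≠ b := ne_of_lt hab
    have h2 : b ≠ c := ne_of_lt hbc
    have h3 : a ≠ c := ne_of_lt (hab.trans hbc)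
    rw [card_insert_of_notMem (by simp [h1, h3]),
      card_insert_of_notMem (by simp [h2]), card_singleton]
  have : (3 : ℕ) ≤ lisLen π := le_csSup (bddMono π) ⟨_, hcard, hK⟩
  omega

lemma antiCardLe (t : Finset (Fin n)) (h : StrictAntiOn ⇑π ↑t) : t.card ≤ ldsLen π :=
  le_csSup (bddAnti π) ⟨t, rfl, h⟩

lemma existsAnti : ∃ t : Finset (Fin n), t.card = ldsLen π ∧ StrictAntiOn ⇑π ↑t := by
  have hne : {k | ∃ t : Finset (Fin n), t.card = k ∧ StrictAntiOn ⇑π ↑t}.Nonempty :=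
    ⟨0, ∅, by simp, by simp [StrictAntiOn]⟩
  obtain ⟨t, ht, hta⟩ := Nat.sSup_mem hne (bddAnti π)
  exact ⟨t, ht, hta⟩
end aux

section count
variable {n : ℕ} (π : Equiv.Perm (Fin n))

lemma totalPairs :
    ((univ : Finset (Fin n × Fin n)).filter (fun p => p.1 < p.2)).card = n.choose 2 := by
  rw [card_eq_sum_card_fiberwise (f := fun p => p.2) (t := univ) (fun x _ => mem_univ _)]
  have hfib : ∀ j : Fin n,
      ((univ : Finset (Fin n × Fin n)).filter (fun p => p.1 < p.2) |>.filter
        (fun p => p.2 = j)).card = (j : ℕ) := by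
    intro j
    rw [← Fin.card_Iio (b := j)]
    apply card_bij' (fun p _ => p.1) (fun i _ => (i, j))
    case hi =>
      intro p hp
      simp only [mem_filter, mem_univ, true_and] at hp
      rw [mem_Iio, ← hp.2]
      exact hp.1
    case hj =>
      intro i hi
      simp only [mem_Iio] at hi
      simp [hi]
    case left_inv =>
      intro p hp
      simp only [mem_filter, mem_univ, true_and] at hp
      exact Prod.ext rfl hp.2.symm
    case right_inv =>
      intro i hi; rfl
  simp only [hfib]
  rw [Fin.sum_univ_eq_sum_range (fun i => i) n, sum_range_id, Nat.choose_two_right]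

lemma invAddInc :
    invCount π +
      ((univ : Finset (Fin n × Fin n)).filter (fun p => p.1 < p.2 ∧ π p.1 < π p.2)).card
      = n.choose 2 := by
  classical
  rw [← totalPairs (n := n)]
  have h1 : (univ.filter fun p : Fin n × Fin n => p.1 < p.2 ∧ π p.2 < π p.1)
      = (univ.filter (fun p : Fin n × Fin n => p.1 < p.2)).filter
          (fun p => π p.2 < π p.1) := by
    rw [filter_filter]
  have h2 : (univ.filter fun p : Fin n × Fin n => p.1 < p.2 ∧ π p.1 < π p.2)
      = (univ.filter (fun p : Fin n × Fin n => p.1 < p.2)).filter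
          (fun p => ¬ π p.2 < π p.1) := by
    rw [filter_filter]
    apply filter_congr
    intro p _
    constructor
    · rintro ⟨h, h'⟩; exact ⟨h, fun hc => absurd (h'.trans hc) (lt_irrefl _)⟩
    · rintro ⟨h, h'⟩
      refine ⟨h, lt_of_le_of_ne (not_lt.1 h') ?_⟩
      exact fun he => absurd (π.injective he) (ne_of_lt h)
  rw [invCount, h1, h2, card_filter_add_card_filter_not]
end count

lemma chooseAdd (s r : ℕ) : (s+r).choose 2 = s.choose 2 + r.choose 2 + s*r := by
  induction r with
  | zero => simp
  | succ k ih =>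
    have h1 : s + (k+1) = (s+k)+1 := by ring
    rw [h1, Nat.choose_succ_succ, Nat.choose_one_right, ih, Nat.mul_succ]
    have h2 : (k+1).choose 2 = k.choose 2 + k := by
      rw [Nat.choose_succ_succ, Nat.choose_one_right]
      simp [Nat.succ_eq_add_one]
      omega
    simp only [Nat.succ_eq_add_one, h2]
    ring

section main
variable {n : ℕ} (π : Equiv.Perm (Fin n))

lemma incLe (hlis : lisLen π = 2) (A : Finset (Fin n)) (hA : StrictAntiOn ⇑π ↑A) :
    ((univ : Finset (Fin n × Fin n)).filter (fun p => p.1 < p.2 ∧ π p.1 < π p.2)).card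
      ≤ (univ \ A).card * ldsLen π := by
  classical
  set E := (univ : Finset (Fin n × Fin n)).filter
    (fun p => p.1 < p.2 ∧ π p.1 < π p.2) with hE
  have hEmem : ∀ p ∈ E, p.1 < p.2 ∧ π p.1 < π p.2 := by
    intro p hp; rw [hE, mem_filter] at hp; exact hp.2
  set g : Fin n × Fin n → Fin n := fun p => if p.1 ∈ A then p.2 else p.1 with hg
  have hgmem : ∀ p ∈ E, g p ∈ univ \ A := by
    intro p hp
    obtain ⟨hlt, hinc⟩ := hEmem p hp
    rw [mem_sdiff]
    refine ⟨mem_univ _, ?_⟩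
    by_cases h1 : p.1 ∈ A
    · simp only [hg, if_pos h1]
      intro h2
      exact absurd hinc (asymm (hA h1 h2 hlt))
    · simp only [hg, if_neg h1]
      exact h1
  rw [card_eq_sum_card_fiberwise hgmem]
  have hfib : ∀ v : Fin n, (E.filter (fun p => g p = v)).card ≤ ldsLen π := by
    intro v
    set o : Fin n × Fin n → Fin n := fun p => if p.1 = v then p.2 else p.1 with ho
    -- each element of the fiber is an "increasing neighbor pair" with v
    have hshape : ∀ p ∈ E.filter (fun p => g p = v),
        (p = (v, o p) ∧ v < o p ∧ π v < π (o p)) ∨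
        (p = (o p, v) ∧ o p < v ∧ π (o p) < π v) := by
      intro p hp
      rw [mem_filter] at hp
      obtain ⟨hpE, hgv⟩ := hp
      obtain ⟨hlt, hinc⟩ := hEmem p hpE
      by_cases h1 : p.1 = v
      · left
        simp only [ho, if_pos h1]
        exact ⟨Prod.ext h1 rfl, h1 ▸ hlt, h1 ▸ hinc⟩
      · right
        simp only [ho, if_neg h1]
        by_cases h2 : p.1 ∈ A
        · simp only [hg, if_pos h2] at hgv
          exact ⟨Prod.ext rfl hgv, hgv ▸ hlt, hgv ▸ hinc⟩
        · simp only [hg, if_neg h2] at hgv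
          exact absurd hgv h1
    have hinj : Set.InjOn o (E.filter (fun p => g p = v)) := by
      intro p hp q hq hoq
      rcases hshape p hp with ⟨hp1, hp2, -⟩ | ⟨hp1, hp2, -⟩ <;>
        rcases hshape q hq with ⟨hq1, hq2, -⟩ | ⟨hq1, hq2, -⟩
      · rw [hp1, hq1, hoq]
      · rw [hoq] at hp2; exact absurd hq2 (asymm hp2)
      · rw [hoq] at hp2; exact absurd hq2 (asymm hp2)
      · rw [hp1, hq1, hoq]
    rw [← card_image_of_injOn hinj]
    apply antiCardLe
    intro w1 hw1 w2 hw2 hlt12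
    simp only [coe_image, Set.mem_image, mem_coe, mem_filter] at hw1 hw2
    obtain ⟨p, hp, hpw⟩ := hw1
    obtain ⟨q, hq, hqw⟩ := hw2
    have hp' := hshape p (mem_filter.2 hp)
    have hq' := hshape q (mem_filter.2 hq)
    rw [hpw] at hp'
    rw [hqw] at hq'
    by_contra hcon
    have hne : w1 ≠ w2 := ne_of_lt hlt12
    have h12 : π w1 < π w2 := by
      rcases lt_trichotomy (π w1) (π w2) with h | h | h
      · exact h
      · exact absurd (π.injective h) hne
      · exact absurd h hcon
    rcases hp' with ⟨-, ha, hb⟩ | ⟨-, ha, hb⟩ <;> rcases hq' with ⟨-, hc, hd⟩ | ⟨-, hc, hd⟩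
    · exact noChain3 π hlis v w1 w2 ha hlt12 hb h12
    · exact absurd (hlt12.trans hc) (asymm ha)
    · exact noChain3 π hlis w1 v w2 ha hc hb hd
    · exact noChain3 π hlis w1 w2 v hlt12 hc h12 hd
  calc ∑ v ∈ univ \ A, (E.filter (fun p => g p = v)).card
      ≤ ∑ _v ∈ univ \ A, ldsLen π := sum_le_sum (fun v _ => hfib v)
    _ = (univ \ A).card * ldsLen π := by rw [sum_const, smul_eq_mul]

end main

theorem stmt_0 (s r : ℕ) (hr : 1 ≤ r) (hrs : r ≤ s)
    (π : Equiv.Perm (Fin (s + r)))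
    (hlis : lisLen π = 2) (hlds : ldsLen π = s) :
    s.choose 2 + r.choose 2 ≤ invCount π := by
  classical
  obtain ⟨A, hAcard, hA⟩ := existsAnti π
  rw [hlds] at hAcard
  have hE := incLe π hlis A hA
  rw [hlds] at hE
  have hAc : (univ \ A).card = r := by
    rw [card_sdiff_of_subset (subset_univ A), hAcard, card_univ, Fintype.card_fin]
    omega
  rw [hAc] at hE
  have hsum := invAddInc π
  rw [chooseAdd s r] at hsum
  have := Nat.mul_le_mul_left 1 hE
  nlinarith [hsum, hE]
end

section
/- Let π ∈ S_n with LDS of length s and n = s + r, s > r, and suppose LIS(π) = 2. Then there exists p such that p lies in every longest decreasing subsequence of π, and π with p removed has a longest decreasing subsequence of length s − 1. -/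
open Finset

lemma bddA {n : ℕ} (P : Finset (Fin n) → Prop) :
    BddAbove {k | ∃ t : Finset (Fin n), t.card = k ∧ P t} := by
  refine ⟨n, fun k hk => ?_⟩
  obtain ⟨t, ht, -⟩ := hk
  calc k = t.card := ht.symm
    _ ≤ (univ : Finset (Fin n)).card := card_le_univ t
    _ = n := by simp

/-- Length of the longest decreasing subsequence ending at position `i`. -/
noncomputable def dEnd {n : ℕ} (π : Equiv.Perm (Fin n)) (i : Fin n) : ℕ :=
  sSup {k | ∃ t : Finset (Fin n), t.card = k ∧ StrictAntiOn ⇑π ↑t ∧ i ∈ t ∧ ∀ j ∈ t, j ≤ i}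

lemma singleton_anti {n : ℕ} (π : Equiv.Perm (Fin n)) (i : Fin n) :
    StrictAntiOn ⇑π (↑({i} : Finset (Fin n))) := by
  intro a ha b hb hab
  simp only [coe_singleton, Set.mem_singleton_iff] at ha hb
  subst ha; subst hb; exact absurd hab (lt_irrefl _)

lemma one_mem_dEnd_set {n : ℕ} (π : Equiv.Perm (Fin n)) (i : Fin n) :
    (1 : ℕ) ∈ {k | ∃ t : Finset (Fin n),
      t.card = k ∧ StrictAntiOn ⇑π ↑t ∧ i ∈ t ∧ ∀ j ∈ t, j ≤ i} :=
  ⟨{i}, by simp, singleton_anti π i, by simp, by simp⟩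

lemma dEnd_mem {n : ℕ} (π : Equiv.Perm (Fin n)) (i : Fin n) :
    ∃ t : Finset (Fin n), t.card = dEnd π i ∧ StrictAntiOn ⇑π ↑t ∧ i ∈ t ∧ ∀ j ∈ t, j ≤ i :=
  Nat.sSup_mem ⟨1, one_mem_dEnd_set π i⟩ (bddA _)

lemma one_le_dEnd {n : ℕ} (π : Equiv.Perm (Fin n)) (i : Fin n) : 1 ≤ dEnd π i :=
  le_csSup (bddA _) (one_mem_dEnd_set π i)

lemma dEnd_le_lds {n : ℕ} (π : Equiv.Perm (Fin n)) (i : Fin n) : dEnd π i ≤ ldsLen π :=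
  csSup_le_csSup (bddA _) ⟨1, one_mem_dEnd_set π i⟩
    (fun k hk => by obtain ⟨t, h1, h2, -, -⟩ := hk; exact ⟨t, h1, h2⟩)

lemma dEnd_step {n : ℕ} (π : Equiv.Perm (Fin n)) {i j : Fin n}
    (hij : i < j) (hpi : π j < π i) : dEnd π i + 1 ≤ dEnd π j := by
  obtain ⟨t, hcard, hanti, hit, hle⟩ := dEnd_mem π i
  have hjt : j ∉ t := fun h => absurd (hle j h) (not_le.mpr hij)
  refine le_csSup (bddA _) ⟨insert j t, ?_, ?_, mem_insert_self _ _, ?_⟩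
  · rw [card_insert_of_notMem hjt, hcard]
  · intro a ha b hb hab
    simp only [coe_insert, Set.mem_insert_iff, mem_coe] at ha hb
    rcases ha with ha | ha <;> rcases hb with hb | hb
    · subst ha; subst hb; exact absurd hab (lt_irrefl _)
    · subst ha; exact absurd ((hle b hb).trans_lt hij) (not_lt.mpr hab.le)
    · subst hb
      rcases eq_or_lt_of_le (hle a ha) with h | h
      · exact h ▸ hpi
      · exact hpi.trans (hanti ha hit h)
    · exact hanti ha hb hab
  · intro a ha
    simp only [mem_insert] at ha
    rcases ha with ha | ha
    · exact ha.le
    · exact (hle a ha).trans hij.le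

lemma dEnd_ge_filter {n : ℕ} (π : Equiv.Perm (Fin n)) {t : Finset (Fin n)}
    (hanti : StrictAntiOn ⇑π ↑t) {i : Fin n} (hi : i ∈ t) :
    (t.filter (fun j => j ≤ i)).card ≤ dEnd π i := by
  refine le_csSup (bddA _) ⟨t.filter (fun j => j ≤ i), rfl,
    hanti.mono (coe_subset.mpr (filter_subset _ _)),
    mem_filter.mpr ⟨hi, le_refl i⟩, fun j hj => (mem_filter.mp hj).2⟩

lemma dEnd_add_filter_le {n : ℕ} (π : Equiv.Perm (Fin n)) {t : Finset (Fin n)}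
    (hanti : StrictAntiOn ⇑π ↑t) {i : Fin n} (hi : i ∈ t) :
    dEnd π i + (t.filter (fun j => i < j)).card ≤ ldsLen π := by
  obtain ⟨t', hcard, hanti', hit', hle'⟩ := dEnd_mem π i
  set u := t' ∪ t.filter (fun j => i < j) with hu
  have hdisj : Disjoint t' (t.filter (fun j => i < j)) := by
    rw [disjoint_left]
    intro a ha ha'
    exact absurd (hle' a ha) (not_le.mpr (mem_filter.mp ha').2)
  have hcardu : u.card = dEnd π i + (t.filter (fun j => i < j)).card := by
    rw [hu, card_union_of_disjoint hdisj, hcard]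
  have hantiu : StrictAntiOn ⇑π ↑u := by
    intro a ha b hb hab
    simp only [hu, coe_union, Set.mem_union, mem_coe, mem_filter] at ha hb
    rcases ha with ha | ⟨hat, hia⟩ <;> rcases hb with hb | ⟨hbt, hib⟩
    · exact hanti' ha hb hab
    · have hpb : π b < π i := hanti hi hbt hib
      rcases eq_or_lt_of_le (hle' a ha) with h | h
      · exact h ▸ hpb
      · exact hpb.trans (hanti' ha hit' h)
    · exact absurd ((hle' b hb).trans_lt hia) (not_lt.mpr hab.le)
    · exact hanti hat hbt hab
  calc dEnd π i + (t.filter (fun j => i < j)).card = u.card := hcardu.symm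
    _ ≤ ldsLen π := le_csSup (bddA _) ⟨u, rfl, hantiu⟩

/-- Corollary 4.4: there is a value `p` lying in every longest
decreasing subsequence of `π`, whose removal drops the longest decreasing
subsequence length to `s - 1`. -/
theorem stmt_2 (s r : ℕ) (hr : 1 ≤ r) (hrs : r < s)
    (π : Equiv.Perm (Fin (s + r)))
    (hlis : lisLen π = 2) (hlds : ldsLen π = s) :
    ∃ p : Fin (s + r),
      (∀ t : Finset (Fin (s + r)), StrictAntiOn ⇑π ↑t → t.card = ldsLen π →
        π.symm p ∈ t) ∧
      sSup {k | ∃ t : Finset (Fin (s + r)), t.card = k ∧ StrictAntiOn ⇑π ↑t ∧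
        ∀ i ∈ t, π i ≠ p} = s - 1 := by
  have hn : (0 : ℕ) < s + r := by omega
  -- every decreasing subsequence has length ≤ s
  have ub_lds : ∀ t : Finset (Fin (s + r)), StrictAntiOn ⇑π ↑t → t.card ≤ s := by
    intro t ht
    have := le_csSup (bddA (fun t : Finset (Fin (s + r)) => StrictAntiOn ⇑π ↑t))
      (Set.mem_setOf.mpr ⟨t, rfl, ht⟩)
    rwa [← ldsLen, hlds] at this
  -- every increasing subsequence has length ≤ 2
  have ub_lis : ∀ t : Finset (Fin (s + r)), StrictMonoOn ⇑π ↑t → t.card ≤ 2 := by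
    intro t ht
    have := le_csSup (bddA (fun t : Finset (Fin (s + r)) => StrictMonoOn ⇑π ↑t))
      (Set.mem_setOf.mpr ⟨t, rfl, ht⟩)
    rwa [← lisLen, hlis] at this
  -- dEnd is bounded above by s
  have dle : ∀ i, dEnd π i ≤ s := fun i => (dEnd_le_lds π i).trans (le_of_eq hlds)
  -- on a longest decreasing subsequence t, dEnd i = #{j ∈ t : j ≤ i}
  have dval : ∀ t : Finset (Fin (s + r)), StrictAntiOn ⇑π ↑t → t.card = s →
      ∀ i ∈ t, dEnd π i = (t.filter (fun j => j ≤ i)).card := by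
    intro t hanti hcard i hi
    have h1 := dEnd_ge_filter π hanti hi
    have h2 := dEnd_add_filter_le π hanti hi
    rw [hlds] at h2
    have h3 : (t.filter (fun j => j ≤ i)).card + (t.filter (fun j => i < j)).card = s := by
      have := Finset.card_filter_add_card_filter_not
        (s := t) (p := fun j => j ≤ i)
      have hcong : (t.filter (fun j => ¬ j ≤ i)) = (t.filter (fun j => i < j)) := by
        apply filter_congr; intro j _; simp [not_le]
      rw [hcong] at this
      omega
    omega
  -- every longest decreasing subsequence realizes every class value k ∈ [1, s]
  have surj : ∀ t : Finset (Fin (s + r)), StrictAntiOn ⇑π ↑t → t.card = s →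
      ∀ k ∈ Finset.Icc 1 s, ∃ i ∈ t, dEnd π i = k := by
    intro t hanti hcard k hk
    have hinj : Set.InjOn (dEnd π) ↑t := by
      intro a ha b hb hab
      by_contra hne
      rcases lt_or_gt_of_ne (fun h : a = b => hne h) with h | h
      all_goals {
        have hsub : ∀ x y : Fin (s + r), x ∈ t → y ∈ t → x < y →
            dEnd π x < dEnd π y := by
          intro x y hx hy hxy
          rw [dval t hanti hcard x hx, dval t hanti hcard y hy]
          apply card_lt_card
          constructor
          · intro j hj
            exact mem_filter.mpr ⟨(mem_filter.mp hj).1, ((mem_filter.mp hj).2).trans hxy.le⟩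
          · intro hsub'
            have := hsub' (mem_filter.mpr ⟨hy, le_refl y⟩)
            exact absurd (mem_filter.mp this).2 (not_le.mpr hxy)
        first
          | exact absurd hab (ne_of_lt (hsub a b (mem_coe.mp ha) (mem_coe.mp hb) h))
          | exact absurd hab.symm (ne_of_lt (hsub b a (mem_coe.mp hb) (mem_coe.mp ha) h))
      }
    have himg : t.image (dEnd π) ⊆ Finset.Icc 1 s := by
      intro k hk'
      obtain ⟨i, -, rfl⟩ := mem_image.mp hk'
      exact Finset.mem_Icc.mpr ⟨one_le_dEnd π i, dle i⟩
    have hcardimg : (t.image (dEnd π)).card = s := by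
      rw [Finset.card_image_of_injOn hinj, hcard]
    have : t.image (dEnd π) = Finset.Icc 1 s := by
      apply Finset.eq_of_subset_of_card_le himg
      rw [hcardimg, Nat.card_Icc]
      omega
    rw [← this] at hk
    obtain ⟨i, hi, hik⟩ := mem_image.mp hk
    exact ⟨i, hi, hik⟩
  -- each class is increasing, hence has at most 2 elements
  have class_mono : ∀ k : ℕ, StrictMonoOn ⇑π ↑(univ.filter (fun i => dEnd π i = k)) := by
    intro k a ha b hb hab
    simp only [coe_filter, Set.mem_setOf_eq, mem_univ, true_and] at ha hb
    rcases lt_trichotomy (π a) (π b) with h | h | h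
    · exact h
    · exact absurd (π.injective h) (ne_of_lt hab)
    · have := dEnd_step π hab h
      omega
  have class_le : ∀ k : ℕ, (univ.filter (fun i => dEnd π i = k)).card ≤ 2 :=
    fun k => ub_lis _ (class_mono k)
  -- a longest decreasing subsequence exists
  have hmem_s : ∃ t : Finset (Fin (s + r)), t.card = s ∧ StrictAntiOn ⇑π ↑t := by
    have h0 : (0 : ℕ) ∈ {k | ∃ t : Finset (Fin (s + r)), t.card = k ∧ StrictAntiOn ⇑π ↑t} :=
      ⟨∅, by simp, by intro a ha; simp at ha⟩
    have := Nat.sSup_mem ⟨0, h0⟩ (bddA (fun t : Finset (Fin (s + r)) => StrictAntiOn ⇑π ↑t))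
    rw [← ldsLen, hlds] at this
    exact this
  obtain ⟨t₀, ht₀card, ht₀anti⟩ := hmem_s
  -- each class is nonempty
  have class_ge : ∀ k ∈ Finset.Icc 1 s, 1 ≤ (univ.filter (fun i => dEnd π i = k)).card := by
    intro k hk
    obtain ⟨i, -, hik⟩ := surj t₀ ht₀anti ht₀card k hk
    exact card_pos.mpr ⟨i, mem_filter.mpr ⟨mem_univ i, hik⟩⟩
  -- total count
  have hsum : ∑ k ∈ Finset.Icc 1 s, (univ.filter (fun i => dEnd π i = k)).card = s + r := by
    rw [← Finset.card_eq_sum_card_fiberwise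
      (f := dEnd π) (t := Finset.Icc 1 s) (s := univ)
      (fun i _ => Finset.mem_Icc.mpr ⟨one_le_dEnd π i, dle i⟩)]
    simp
  -- some class is a singleton
  have hone : ∃ k ∈ Finset.Icc 1 s, (univ.filter (fun i => dEnd π i = k)).card = 1 := by
    by_contra hcon
    push_neg at hcon
    have : ∀ k ∈ Finset.Icc 1 s, (univ.filter (fun i => dEnd π i = k)).card = 2 := by
      intro k hk
      have h1 := class_ge k hk
      have h2 := class_le k
      have h3 := hcon k hk
      omega
    have : ∑ k ∈ Finset.Icc 1 s, (univ.filter (fun i => dEnd π i = k)).card = 2 * s := by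
      rw [Finset.sum_congr rfl this, Finset.sum_const, Nat.card_Icc, smul_eq_mul]
      omega
    omega
  obtain ⟨k₀, hk₀, hk₀card⟩ := hone
  obtain ⟨i₀, hi₀⟩ := Finset.card_eq_one.mp hk₀card
  -- i₀ belongs to every longest decreasing subsequence
  have hmem : ∀ t : Finset (Fin (s + r)), StrictAntiOn ⇑π ↑t → t.card = s → i₀ ∈ t := by
    intro t hanti hcard
    obtain ⟨i, hi, hik⟩ := surj t hanti hcard k₀ hk₀
    have : i ∈ univ.filter (fun i => dEnd π i = k₀) := mem_filter.mpr ⟨mem_univ i, hik⟩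
    rw [hi₀, Finset.mem_singleton] at this
    rwa [← this]
  refine ⟨π i₀, ?_, ?_⟩
  · intro t ht hcard
    rw [hlds] at hcard
    rw [Equiv.symm_apply_apply]
    exact hmem t ht hcard
  · have hpres : (s - 1 : ℕ) ∈ {k | ∃ t : Finset (Fin (s + r)), t.card = k ∧
        StrictAntiOn ⇑π ↑t ∧ ∀ i ∈ t, π i ≠ π i₀} := by
      refine ⟨t₀.erase i₀, ?_, ?_, ?_⟩
      · rw [card_erase_of_mem (hmem t₀ ht₀anti ht₀card), ht₀card]
      · exact ht₀anti.mono (coe_subset.mpr (erase_subset _ _))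
      · intro i hi
        exact fun h => absurd (π.injective h) (ne_of_mem_erase hi)
    have hub : ∀ k ∈ {k | ∃ t : Finset (Fin (s + r)), t.card = k ∧
        StrictAntiOn ⇑π ↑t ∧ ∀ i ∈ t, π i ≠ π i₀}, k ≤ s - 1 := by
      rintro k ⟨t, rfl, hanti, hval⟩
      have h1 : t.card ≤ s := ub_lds t hanti
      have h2 : t.card ≠ s := by
        intro h
        exact hval i₀ (hmem t hanti h) rfl
      omega
    exact le_antisymm (csSup_le ⟨s - 1, hpres⟩ hub) (le_csSup (bddA _) hpres)
end

section
/- Let π = (s, s−1, ..., 1, s+r, ..., s+1) ∈ S_{s+r} with s ≥ r ≥ 1, and let Δ < r. Let μ and ν be partitions with |μ| + |ν| = Δ, ℓ(μ) ≤ s, μ_1 < r, ℓ(ν) ≤ s, ν_1 < r. Then the set of values of π moved (not fixed) by the inner jump action of μ is disjoint from the set of values moved by the outer jump action of ν. -/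
/- Since all parts are positive, a partition has at most as many parts as its size, and its largest
part is at most its size. Hence `ℓ(μ) + ℓ(ν) ≤ Δ < r ≤ s`, which separates `{1, …, ℓ(μ)}` from
`{s - ℓ(ν) + 1, …}`, and `μ₁ + ν₁ ≤ Δ < r`, which separates `{…, s + ν₁}` from
`{s + r - μ₁ + 1, …}`. -/

theorem List.headD_zero_le_sum (l : List ℕ) : l.headD 0 ≤ l.sum := by
  cases l <;> simp

theorem stmt_9_general (s r Δ : ℕ) (hrs : r ≤ s) (hΔ : Δ < r)
    (μ ν : List ℕ)
    (hμpos : ∀ x ∈ μ, 0 < x)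
    (hνpos : ∀ x ∈ ν, 0 < x)
    (hsum : μ.sum + ν.sum = Δ) :
    Disjoint
      (Finset.Icc 1 μ.length ∪ Finset.Icc (s + r - μ.headD 0 + 1) (s + r))
      (Finset.Icc (s - ν.length + 1) (s + ν.headD 0)) := by
  have hμℓ := μ.length_le_sum_of_one_le hμpos
  have hνℓ := ν.length_le_sum_of_one_le hνpos
  have hμ₁ := μ.headD_zero_le_sum
  have hν₁ := ν.headD_zero_le_sum
  rw [Finset.disjoint_left]
  intro n hn hn'
  simp only [Finset.mem_union, Finset.mem_Icc] at hn hn'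
  omega

/-- Lemma 3.2: with the partitions `μ, ν` written as weakly
decreasing lists of positive integers, the values of the minimal permutation
`(s, …, 1, s+r, …, s+1)` moved by the inner jump action of `μ`, namely
`{1, …, ℓ(μ)} ∪ {s+r-μ₁+1, …, s+r}`, are disjoint from the values moved by
the outer jump action of `ν`, namely `{s-ℓ(ν)+1, …, s+ν₁}`. -/
theorem stmt_9 (s r Δ : ℕ) (hr : 1 ≤ r) (hrs : r ≤ s) (hΔ : Δ < r)
    (μ ν : List ℕ)
    (hμsort : μ.Pairwise (· ≥ ·)) (hμpos : ∀ x ∈ μ, 0 < x)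
    (hνsort : ν.Pairwise (· ≥ ·)) (hνpos : ∀ x ∈ ν, 0 < x)
    (hsum : μ.sum + ν.sum = Δ)
    (hμlen : μ.length ≤ s) (hμ1 : μ.headD 0 < r)
    (hνlen : ν.length ≤ s) (hν1 : ν.headD 0 < r) :
    Disjoint
      (Finset.Icc 1 μ.length ∪ Finset.Icc (s + r - μ.headD 0 + 1) (s + r))
      (Finset.Icc (s - ν.length + 1) (s + ν.headD 0)) :=
  stmt_9_general s r Δ hrs hΔ μ ν hμpos hνpos hsum
end

section
/- For n = s + r with s ≥ r ≥ 1, the number of permutations π ∈ S_n with LIS(π) = 2, LDS(π) = s, and exactly C(s,2)+C(r,2) inversions (the minimum) is 1 if s = r and 2 if s > r, and these permutations are exactly (s,...,1,s+r,...,s+1) and (r,...,1,s+r,...,r+1). -/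
/-! If `π` has no increasing subsequence of length 3, its left-to-right minima `M` and the
remaining entries both form decreasing subsequences, so the inversions of `π` are the
`C(|M|,2) + C(|Mᶜ|,2)` pairs inside the two parts plus `X` crossing ones. Comparing with
`C(s,2) + C(r,2)` gives `X + s r = |M| |Mᶜ|`, while a decreasing subsequence of length `s`
with `x` entries in `M` and `y` outside it yields `x y ≤ X`. As `x + y = s` and
`|M|, |Mᶜ| ≤ s`, this forces `X = 0` and `|M| ∈ {s, r}`; without crossing inversions `M` is
an initial segment and `π` is the layered permutation with blocks `|M|` and `|Mᶜ|`. -/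

open Finset

section LongestSubsequences

variable {n : ℕ} (π : Equiv.Perm (Fin n))

lemma card_le_lisLen {t : Finset (Fin n)} (ht : StrictMonoOn π t) : #t ≤ lisLen π :=
  le_csSup ⟨n, by rintro _ ⟨t, rfl, -⟩; simpa using t.card_le_univ⟩ ⟨t, rfl, ht⟩

lemma card_le_ldsLen {t : Finset (Fin n)} (ht : StrictAntiOn π t) : #t ≤ ldsLen π :=
  le_csSup ⟨n, by rintro _ ⟨t, rfl, -⟩; simpa using t.card_le_univ⟩ ⟨t, rfl, ht⟩

lemma lisLen_le {m : ℕ} (h : ∀ t : Finset (Fin n), StrictMonoOn π t → #t ≤ m) :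
    lisLen π ≤ m :=
  csSup_le ⟨0, ∅, rfl, by simp [Set.subsingleton_empty.strictMonoOn]⟩
    (by rintro _ ⟨t, rfl, ht⟩; exact h t ht)

lemma ldsLen_le {m : ℕ} (h : ∀ t : Finset (Fin n), StrictAntiOn π t → #t ≤ m) :
    ldsLen π ≤ m :=
  csSup_le ⟨0, ∅, rfl, by simp [Set.subsingleton_empty.strictAntiOn]⟩
    (by rintro _ ⟨t, rfl, ht⟩; exact h t ht)

lemma exists_strictAntiOn_card_eq_ldsLen :
    ∃ t : Finset (Fin n), #t = ldsLen π ∧ StrictAntiOn π t :=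
  Nat.sSup_mem (s := {k | ∃ t : Finset (Fin n), #t = k ∧ StrictAntiOn π t})
    ⟨0, ∅, rfl, by simp [Set.subsingleton_empty.strictAntiOn]⟩
    ⟨n, by rintro _ ⟨t, rfl, -⟩; simpa using t.card_le_univ⟩

variable {π}

lemma two_le_lisLen {i j : Fin n} (hij : i < j) (h : π i < π j) : 2 ≤ lisLen π := by
  refine (card_pair hij.ne).ge.trans (card_le_lisLen π ?_)
  intro x hx y hy hxy
  simp only [coe_insert, coe_singleton, Set.mem_insert_iff, Set.mem_singleton_iff] at hx hy
  rcases hx with rfl | rfl <;> rcases hy with rfl | rfl <;> order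

lemma three_le_lisLen {i j k : Fin n} (hij : i < j) (hjk : j < k) (h₁ : π i < π j)
    (h₂ : π j < π k) : 3 ≤ lisLen π := by
  refine (card_eq_three.2 ⟨i, j, k, hij.ne, (hij.trans hjk).ne, hjk.ne, rfl⟩).ge.trans
    (card_le_lisLen π ?_)
  intro x hx y hy hxy
  simp only [coe_insert, coe_singleton, Set.mem_insert_iff, Set.mem_singleton_iff] at hx hy
  rcases hx with rfl | rfl | rfl <;> rcases hy with rfl | rfl | rfl <;> order

lemma lisLen_le_two_of_strictAntiOn {A : Finset (Fin n)} (hA : StrictAntiOn π A)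
    (hAc : StrictAntiOn π ↑Aᶜ) : lisLen π ≤ 2 := by
  refine lisLen_le π fun t ht => ?_
  have hsame : ∀ u ∈ t, ∀ v ∈ t, u < v → (u ∈ A ↔ v ∈ A) → False := by
    intro u hu v hv huv hAuv
    have := ht hu hv huv
    by_cases hu' : u ∈ A
    · exact (hA hu' (hAuv.1 hu') huv).asymm this
    · exact (hAc (by simpa using hu') (by simpa [hAuv] using hu') huv).asymm this
  calc #t ≤ #(univ : Finset Bool) :=
        card_le_card_of_injOn (fun i => decide (i ∈ A)) (fun _ _ => mem_univ _) <| by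
          intro u hu v hv huv
          simp only [decide_eq_decide] at huv
          rcases lt_trichotomy u v with h | h | h
          · exact (hsame u hu v hv h huv).elim
          · exact h
          · exact (hsame v hv u hu h huv.symm).elim
    _ = 2 := rfl

lemma ldsLen_le_max {A : Finset (Fin n)} (h : ∀ i ∈ A, ∀ j ∉ A, i < j ∧ π i < π j) :
    ldsLen π ≤ max #A #Aᶜ := by
  refine ldsLen_le π fun t ht => ?_
  by_cases htA : t ⊆ A
  · exact (card_le_card htA).trans (le_max_left _ _)
  · obtain ⟨j, hjt, hjA⟩ := not_subset.1 htA
    have htAc : t ⊆ Aᶜ := fun i hit => mem_compl.2 fun hiA =>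
      ((h i hiA j hjA).2).asymm (ht hit hjt (h i hiA j hjA).1)
    exact (card_le_card htAc).trans (le_max_right _ _)

end LongestSubsequences

section Inversions

variable {n : ℕ} (π : Equiv.Perm (Fin n)) (A : Finset (Fin n))

def crossInversions : Finset (Fin n × Fin n) :=
  {p | p.1 < p.2 ∧ π p.2 < π p.1 ∧ (p.1 ∈ A ↔ p.2 ∉ A)}

variable {π A}

lemma invCount_eq_of_strictAntiOn (hA : StrictAntiOn π A) (hAc : StrictAntiOn π ↑Aᶜ) :
    invCount π = (#A).choose 2 + (#Aᶜ).choose 2 + #(crossInversions π A) := by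
  have hsplit : ({p | p.1 < p.2 ∧ π p.2 < π p.1} : Finset (Fin n × Fin n)) =
      ({p ∈ A ×ˢ A | p.1 < p.2} ∪ {p ∈ Aᶜ ×ˢ Aᶜ | p.1 < p.2}) ∪ crossInversions π A := by
    ext ⟨i, j⟩
    have h₁ : i ∈ A → j ∈ A → i < j → π j < π i := fun hi hj => hA hi hj
    have h₂ : i ∉ A → j ∉ A → i < j → π j < π i := fun hi hj => hAc (by simpa) (by simpa)
    simp only [crossInversions, mem_filter, mem_univ, true_and, mem_union, mem_product,
      mem_compl]
    tauto
  rw [invCount, hsplit, card_union_of_disjoint, card_union_of_disjoint,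
    card_product_filter_lt, card_product_filter_lt]
  · exact disjoint_left.2 fun p => by simp +contextual
  · refine disjoint_left.2 fun p => ?_
    simp only [crossInversions, mem_filter, mem_union, mem_product, mem_compl, mem_univ,
      true_and]
    tauto

lemma card_mul_card_le_card_crossInversions {D : Finset (Fin n)} (hD : StrictAntiOn π D) :
    #{i ∈ D | i ∈ A} * #{i ∈ D | i ∉ A} ≤ #(crossInversions π A) := by
  rw [← card_product]
  refine card_le_card_of_injOn (fun p => (min p.1 p.2, max p.1 p.2)) ?_ ?_
  · rintro ⟨u, v⟩ huv
    simp only [coe_product, coe_filter, Set.mem_prod, Set.mem_ofPred_eq] at huv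
    obtain ⟨⟨huD, huA⟩, hvD, hvA⟩ := huv
    have hne : u ≠ v := by rintro rfl; exact hvA huA
    simp only [crossInversions, coe_filter, mem_univ, true_and, Set.mem_ofPred_eq]
    rcases hne.lt_or_gt with h | h
    · simp [min_eq_left h.le, max_eq_right h.le, h, hD huD hvD h, huA, hvA]
    · simp [min_eq_right h.le, max_eq_left h.le, h, hD hvD huD h, huA, hvA]
  · rintro ⟨u, v⟩ huv ⟨u', v'⟩ huv' h
    simp only [coe_product, coe_filter, Set.mem_prod, Set.mem_ofPred_eq] at huv huv'
    simp only [Prod.mk.injEq] at h ⊢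
    grind

end Inversions

lemma Equiv.Perm.eq_of_forall_lt_imp_lt_iff_lt {n : ℕ} {π σ : Equiv.Perm (Fin n)}
    (h : ∀ i j, i < j → (π i < π j ↔ σ i < σ j)) : π = σ := by
  have hmono : StrictMono (π * σ⁻¹) := by
    intro x y hxy
    obtain ⟨i, rfl⟩ := σ.surjective x
    obtain ⟨j, rfl⟩ := σ.surjective y
    simp only [Equiv.Perm.mul_apply, Equiv.Perm.inv_def, Equiv.symm_apply_apply]
    rcases lt_trichotomy i j with hij | rfl | hij
    · exact (h i j hij).2 hxy
    · exact (lt_irrefl _ hxy).elim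
    · exact lt_of_le_of_ne (not_lt.1 fun h' => hxy.not_gt ((h j i hij).1 h'))
        (π.injective.ne hij.ne')
  exact mul_inv_eq_one.1 (Equiv.ext (congrFun hmono.eq_id))

section Layered

variable {n a : ℕ}

def initialSegment (n a : ℕ) : Finset (Fin n) := {i | (i : ℕ) < a}

@[simp]
lemma mem_initialSegment {i : Fin n} : i ∈ initialSegment n a ↔ (i : ℕ) < a := by
  simp [initialSegment]

lemma card_initialSegment (ha : a ≤ n) : #(initialSegment n a) = a := by
  rw [initialSegment, Fin.card_filter_val_lt, min_eq_right ha]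

lemma card_compl_initialSegment (ha : a ≤ n) : #(initialSegment n a)ᶜ = n - a := by
  rw [card_compl, card_initialSegment ha, Fintype.card_fin]

lemma eq_initialSegment_of_forall_lt {A : Finset (Fin n)} (h : ∀ i ∈ A, ∀ j ∉ A, i < j) :
    A = initialSegment n #A := by
  ext i
  rw [mem_initialSegment]
  constructor
  · intro hi
    have : Iic i ⊆ A := fun j hj => by
      by_contra hjA
      exact (mem_Iic.1 hj).not_gt (h i hi j hjA)
    simpa using card_le_card this
  · intro hi
    by_contra hiA
    have : A ⊆ Iio i := fun j hj => mem_Iio.2 (h j hj i hiA)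
    have := card_le_card this
    rw [Fin.card_Iio] at this
    omega

/-- The layered permutation `(a, …, 1, n, …, a + 1)`, written 0-indexed. -/
def layered (n a : ℕ) (ha : a ≤ n) : Equiv.Perm (Fin n) :=
  Function.Involutive.toPerm
    (fun i => ⟨if (i : ℕ) < a then a - 1 - i else a + n - 1 - i, by split_ifs <;> omega⟩)
    (fun i => by ext; dsimp only; split_ifs <;> omega)

lemma layered_apply_val (ha : a ≤ n) (i : Fin n) :
    (layered n a ha i : ℕ) = if (i : ℕ) < a then a - 1 - i else a + n - 1 - i :=
  rfl

lemma eq_layered_iff (ha : a ≤ n) (π : Equiv.Perm (Fin n)) :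
    π = layered n a ha ↔ ∀ i, (π i : ℕ) = if (i : ℕ) < a then a - 1 - i else a + n - 1 - i := by
  simp only [Equiv.ext_iff, Fin.ext_iff, layered_apply_val]

lemma layered_lt_layered_iff (ha : a ≤ n) {i j : Fin n} (hij : i < j) :
    layered n a ha i < layered n a ha j ↔ (i : ℕ) < a ∧ a ≤ j := by
  rw [Fin.lt_def, layered_apply_val, layered_apply_val]
  rw [Fin.lt_def] at hij
  split_ifs <;> omega

lemma strictAntiOn_layered_initialSegment (ha : a ≤ n) :
    StrictAntiOn (layered n a ha) (initialSegment n a) := by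
  intro i hi j hj hij
  simp only [mem_coe, mem_initialSegment] at hi hj
  rw [Fin.lt_def] at hij ⊢
  rw [layered_apply_val, layered_apply_val, if_pos hi, if_pos hj]
  omega

lemma strictAntiOn_layered_compl_initialSegment (ha : a ≤ n) :
    StrictAntiOn (layered n a ha) ↑(initialSegment n a)ᶜ := by
  intro i hi j hj hij
  simp only [coe_compl, Set.mem_compl_iff, mem_coe, mem_initialSegment] at hi hj
  rw [Fin.lt_def] at hij ⊢
  rw [layered_apply_val, layered_apply_val, if_neg hi, if_neg hj]
  omega

lemma lisLen_layered (ha₀ : 1 ≤ a) (ha : a < n) : lisLen (layered n a ha.le) = 2 :=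
  (lisLen_le_two_of_strictAntiOn (strictAntiOn_layered_initialSegment ha.le)
    (strictAntiOn_layered_compl_initialSegment ha.le)).antisymm <|
    two_le_lisLen (i := ⟨a - 1, by omega⟩) (j := ⟨a, ha⟩) (Fin.lt_def.2 (by simp; omega))
      ((layered_lt_layered_iff ha.le (Fin.lt_def.2 (by simp; omega))).2 (by simp; omega))

lemma ldsLen_layered (ha : a ≤ n) : ldsLen (layered n a ha) = max a (n - a) := by
  apply le_antisymm
  · have := ldsLen_le_max (π := layered n a ha) (A := initialSegment n a) fun i hi j hj => by
      simp only [mem_initialSegment, not_lt] at hi hj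
      have hij : i < j := Fin.lt_def.2 (by omega)
      exact ⟨hij, (layered_lt_layered_iff ha hij).2 ⟨hi, hj⟩⟩
    rwa [card_initialSegment ha, card_compl_initialSegment ha] at this
  · refine max_le ?_ ?_
    · simpa [card_initialSegment ha] using
        card_le_ldsLen _ (strictAntiOn_layered_initialSegment ha)
    · simpa [card_compl_initialSegment ha] using
        card_le_ldsLen _ (strictAntiOn_layered_compl_initialSegment ha)

lemma invCount_layered (ha : a ≤ n) :
    invCount (layered n a ha) = a.choose 2 + (n - a).choose 2 := by
  have hcross : crossInversions (layered n a ha) (initialSegment n a) = ∅ := by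
    refine filter_eq_empty_iff.2 fun p _ ⟨hij, hinv, hside⟩ => hinv.not_gt ?_
    rw [layered_lt_layered_iff ha hij]
    simp only [mem_initialSegment, not_lt] at hside
    omega
  rw [invCount_eq_of_strictAntiOn (strictAntiOn_layered_initialSegment ha)
    (strictAntiOn_layered_compl_initialSegment ha), hcross, card_empty, add_zero,
    card_initialSegment ha, card_compl_initialSegment ha]

lemma eq_layered_of_crossInversions_eq_empty (ha : a ≤ n) {π : Equiv.Perm (Fin n)}
    (hA : StrictAntiOn π (initialSegment n a)) (hAc : StrictAntiOn π ↑(initialSegment n a)ᶜ)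
    (hcross : crossInversions π (initialSegment n a) = ∅) : π = layered n a ha := by
  refine Equiv.Perm.eq_of_forall_lt_imp_lt_iff_lt fun i j hij => ?_
  rw [layered_lt_layered_iff ha hij]
  have hij' : (i : ℕ) < j := hij
  by_cases hi : (i : ℕ) < a <;> by_cases hj : (j : ℕ) < a
  · exact iff_of_false (hA (by simpa) (by simpa) hij).asymm (by omega)
  · refine iff_of_true ?_ ⟨hi, by omega⟩
    by_contra hij_inv
    have : (i, j) ∈ crossInversions π (initialSegment n a) := by
      simp only [crossInversions, mem_filter, mem_univ, true_and, mem_initialSegment]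
      exact ⟨hij, lt_of_le_of_ne (not_lt.1 hij_inv) (π.injective.ne hij.ne'), by simp [hi, hj]⟩
    simp [hcross] at this
  · omega
  · exact iff_of_false (hAc (by simpa using hi) (by simpa using hj) hij).asymm (by omega)

end Layered

lemma two_mul_choose_two_add_self (m : ℕ) : 2 * m.choose 2 + m = m * m := by
  rw [Nat.choose_two_right, mul_comm, Nat.div_two_mul_two_of_even (Nat.even_mul_pred_self m)]
  cases m <;> simp [Nat.mul_succ]

lemma add_mul_eq_mul_of_choose_two {a b s r X : ℕ} (hab : a + b = s + r)
    (h : a.choose 2 + b.choose 2 + X = s.choose 2 + r.choose 2) : X + s * r = a * b := by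
  have key : a * a + b * b + 2 * X = s * s + r * r := by
    linarith [two_mul_choose_two_add_self a, two_mul_choose_two_add_self b,
      two_mul_choose_two_add_self s, two_mul_choose_two_add_self r]
  zify at key hab ⊢
  nlinarith [key, hab]

lemma eq_zero_and_eq_or_eq_of_mul_le {a b s r x y X : ℕ} (hr : 1 ≤ r) (hab : a + b = s + r)
    (ha : a ≤ s) (hb : b ≤ s) (hxy : x + y = s) (hx : x ≤ a) (hy : y ≤ b)
    (hX : X + s * r = a * b) (hxyX : x * y ≤ X) : X = 0 ∧ (a = s ∨ a = r) := by
  obtain ⟨t, rfl⟩ : ∃ t, a = r + t := ⟨a - r, by omega⟩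
  obtain ⟨u, rfl⟩ : ∃ u, s = r + t + u := ⟨s - (r + t), by omega⟩
  obtain ⟨p, rfl⟩ : ∃ p, x = t + p := ⟨x - t, by omega⟩
  obtain ⟨q, rfl⟩ : ∃ q, y = u + q := ⟨y - u, by omega⟩
  obtain rfl : b = r + u := by omega
  have hXtu : X = t * u := by nlinarith
  subst hXtu
  have hpq : p + q = r := by omega
  have htq : t * q = 0 := by nlinarith
  have hpu : p * u = 0 := by nlinarith
  rcases Nat.mul_eq_zero.1 htq with rfl | rfl
  · simp
  · rcases Nat.mul_eq_zero.1 hpu with rfl | rfl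
    · omega
    · simp

section LeftToRightMinima

variable {n : ℕ} (π : Equiv.Perm (Fin n))

def leftToRightMinima : Finset (Fin n) := {i | ∀ j < i, π i < π j}

variable {π}

lemma mem_leftToRightMinima {i : Fin n} : i ∈ leftToRightMinima π ↔ ∀ j < i, π i < π j := by
  simp [leftToRightMinima]

lemma strictAntiOn_leftToRightMinima : StrictAntiOn π (leftToRightMinima π) :=
  fun i _ _ hj hij => mem_leftToRightMinima.1 hj i hij

lemma strictAntiOn_compl_leftToRightMinima (h : lisLen π ≤ 2) :
    StrictAntiOn π ↑(leftToRightMinima π)ᶜ := by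
  intro u hu v _ huv
  simp only [coe_compl, Set.mem_compl_iff, mem_coe, mem_leftToRightMinima, not_forall,
    not_lt] at hu
  obtain ⟨k, hku, hπku⟩ := hu
  by_contra hπuv
  have := three_le_lisLen hku huv (lt_of_le_of_ne hπku (π.injective.ne hku.ne))
    (lt_of_le_of_ne (not_lt.1 hπuv) (π.injective.ne huv.ne))
  omega

lemma lt_of_crossInversions_leftToRightMinima_eq_empty
    (hcross : crossInversions π (leftToRightMinima π) = ∅) {i j : Fin n}
    (hi : i ∈ leftToRightMinima π) (hj : j ∉ leftToRightMinima π) : i < j := by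
  by_contra hji
  have hji : j < i := lt_of_le_of_ne (not_lt.1 hji) fun h => hj (h ▸ hi)
  have : (j, i) ∈ crossInversions π (leftToRightMinima π) := by
    simp only [crossInversions, mem_filter, mem_univ, true_and]
    exact ⟨hji, mem_leftToRightMinima.1 hi j hji, by simp [hi, hj]⟩
  simp [hcross] at this

end LeftToRightMinima

lemma eq_layered_or_eq_layered {s r : ℕ} (hr : 1 ≤ r) {π : Equiv.Perm (Fin (s + r))}
    (hlis : lisLen π ≤ 2) (hlds : ldsLen π = s)
    (hinv : invCount π = s.choose 2 + r.choose 2) :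
    π = layered (s + r) s (by omega) ∨ π = layered (s + r) r (by omega) := by
  set M := leftToRightMinima π
  have hM : StrictAntiOn π M := strictAntiOn_leftToRightMinima
  have hMc : StrictAntiOn π ↑Mᶜ := strictAntiOn_compl_leftToRightMinima hlis
  obtain ⟨D, hDcard, hD⟩ := exists_strictAntiOn_card_eq_ldsLen π
  have hcard : #M + #Mᶜ = s + r := (card_add_card_compl M).trans (Fintype.card_fin _)
  obtain ⟨hX, hMs⟩ := eq_zero_and_eq_or_eq_of_mul_le hr hcard
    ((card_le_ldsLen π hM).trans hlds.le) ((card_le_ldsLen π hMc).trans hlds.le)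
    (by rw [card_filter_add_card_filter_not, hDcard, hlds])
    (card_le_card fun i hi => (mem_filter.1 hi).2)
    (card_le_card fun i hi => mem_compl.2 (mem_filter.1 hi).2)
    (add_mul_eq_mul_of_choose_two hcard (by rw [← hinv, invCount_eq_of_strictAntiOn hM hMc]))
    (card_mul_card_le_card_crossInversions hD)
  have hseg : M = initialSegment (s + r) #M := eq_initialSegment_of_forall_lt fun i hi j hj =>
    lt_of_crossInversions_leftToRightMinima_eq_empty (card_eq_zero.1 hX) hi hj
  rcases hMs with h | h <;> rw [h] at hseg <;> rw [hseg] at hM hMc hX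
  · exact .inl (eq_layered_of_crossInversions_eq_empty _ hM hMc (card_eq_zero.1 hX))
  · exact .inr (eq_layered_of_crossInversions_eq_empty _ hM hMc (card_eq_zero.1 hX))

lemma lisLen_ldsLen_invCount_eq_iff {s r : ℕ} (hr : 1 ≤ r) (hrs : r ≤ s)
    (π : Equiv.Perm (Fin (s + r))) :
    (lisLen π = 2 ∧ ldsLen π = s ∧ invCount π = s.choose 2 + r.choose 2) ↔
      π = layered (s + r) s (by omega) ∨ π = layered (s + r) r (by omega) := by
  refine ⟨fun ⟨hlis, hlds, hinv⟩ => eq_layered_or_eq_layered hr hlis.le hlds hinv, ?_⟩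
  rintro (rfl | rfl)
  · refine ⟨lisLen_layered (by omega) (by omega), ?_, ?_⟩
    · rw [ldsLen_layered]; omega
    · rw [invCount_layered, Nat.add_sub_cancel_left]
  · refine ⟨lisLen_layered hr (by omega), ?_, ?_⟩
    · rw [ldsLen_layered]; omega
    · rw [invCount_layered, Nat.add_sub_cancel, add_comm]

/-- two-column case of Hohlweg's theorem: the permutations with
LIS = 2, LDS = s and the minimal number `C(s,2) + C(r,2)` of inversions are
exactly `(s, …, 1, s+r, …, s+1)` and `(r, …, 1, s+r, …, r+1)` (written
0-indexed below), and their number is `1` if `s = r` and `2` if `s > r`. -/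
theorem stmt_14 (s r : ℕ) (hr : 1 ≤ r) (hrs : r ≤ s) :
    (∀ π : Equiv.Perm (Fin (s + r)),
      (lisLen π = 2 ∧ ldsLen π = s ∧ invCount π = s.choose 2 + r.choose 2) ↔
      ((∀ i : Fin (s + r), (π i : ℕ) =
          if (i : ℕ) < s then s - 1 - (i : ℕ) else 2 * s + r - 1 - (i : ℕ)) ∨
       (∀ i : Fin (s + r), (π i : ℕ) =
          if (i : ℕ) < r then r - 1 - (i : ℕ) else s + 2 * r - 1 - (i : ℕ)))) ∧
    Nat.card {π : Equiv.Perm (Fin (s + r)) //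
        lisLen π = 2 ∧ ldsLen π = s ∧
        invCount π = s.choose 2 + r.choose 2} =
      (if s = r then 1 else 2) := by
  have hchar := lisLen_ldsLen_invCount_eq_iff hr hrs
  refine ⟨fun π => ?_, ?_⟩
  · rw [hchar, eq_layered_iff, eq_layered_iff, show s + (s + r) = 2 * s + r by ring,
      show r + (s + r) = s + 2 * r by ring]
  · rw [Nat.card_congr (Equiv.subtypeEquivRight hchar)]
    split_ifs with hsr
    · subst hsr
      simp
    · refine (Set.ncard_pair fun h => hsr ?_ : Set.ncard _ = 2)
      have := (eq_layered_iff (by omega) _).1 h.symm ⟨0, by omega⟩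
      simp only [layered_apply_val] at this
      split_ifs at this <;> omega
end

section
/- Let π ∈ S_n with n = s+r, s > r ≥ 1, LIS(π) = 2, LDS(π) = s, and inv(π) = C(s,2)+C(r,2)+Δ with Δ < r. Then π cannot simultaneously agree with both minimal permutations on their respective fixed blocks: if π(i) = r+1−i for some 1 ≤ i ≤ r, then π does not arise from the minimal permutation (s,...,1,s+r,...,s+1) by a jump partition of size Δ. -/
/-- The adjacent transposition `s_a` (1-indexed, as in the paper): it swaps
the entries at positions `a` and `a+1` of the one-line notation, i.e. the
0-indexed positions `a-1` and `a`; it is the identity if out of range. -/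
def adjT (n a : ℕ) : Equiv.Perm (Fin n) :=
  if h : 0 < a ∧ a < n then Equiv.swap ⟨a - 1, by omega⟩ ⟨a, h.2⟩ else 1

/-- The ascending word `s_a s_{a+1} ⋯ s_{a+m-1}`. -/
def ascWord (n a m : ℕ) : Equiv.Perm (Fin n) :=
  ((List.range m).map fun t => adjT n (a + t)).prod

/-- The descending word `s_{a+m-1} ⋯ s_{a+1} s_a`. -/
def descWord (n a m : ℕ) : Equiv.Perm (Fin n) :=
  ((List.range m).map fun t => adjT n (a + t)).reverse.prod

/-- The word of adjacent transpositions realizing the inner jump action of a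
single partition `μ` at the block boundary `b = c_i^*` (Definition 3.1):
`(s_b ⋯ s_{b-1+μ₁}) (s_{b-1} ⋯ s_{b-2+μ₂}) ⋯ (s_{b-ℓ+1} ⋯ s_{b-ℓ+μ_ℓ})`,
acting by right multiplication. -/
def innerBlockWord (n b : ℕ) (μ : List ℕ) : Equiv.Perm (Fin n) :=
  ((List.range μ.length).map fun j => ascWord n (b - j) (μ.getD j 0)).prod

/-- The word of adjacent transpositions realizing the outer jump action of a
single partition `ν` at the block boundary `b = c_i^*` (Definition 3.3):
`(s_{b-1+ν₁} ⋯ s_b) (s_{b-2+ν₂} ⋯ s_{b-1}) ⋯ (s_{b-ℓ+ν_ℓ} ⋯ s_{b-ℓ+1})`,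
acting by left multiplication. -/
def outerBlockWord (n b : ℕ) (ν : List ℕ) : Equiv.Perm (Fin n) :=
  ((List.range ν.length).map fun j => descWord n (b - j) (ν.getD j 0)).prod

/-- The word realizing the inner jump action of a sequence of partitions
`μs = (μ⁽¹⁾, …)`, the `i`-th acting at the boundary `c_i^* = c₁ + ⋯ + c_i`. -/
def innerWord (n : ℕ) (c : List ℕ) (μs : List (List ℕ)) : Equiv.Perm (Fin n) :=
  ((List.range μs.length).map fun i =>
    innerBlockWord n ((c.take (i + 1)).sum) (μs.getD i [])).prod

/-- The word realizing the outer jump action of a sequence of partitions. -/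
def outerWord (n : ℕ) (c : List ℕ) (νs : List (List ℕ)) : Equiv.Perm (Fin n) :=
  ((List.range νs.length).map fun i =>
    outerBlockWord n ((c.take (i + 1)).sum) (νs.getD i [])).prod

open Equiv Finset

variable {n : ℕ}

lemma invCount_inv (σ : Perm (Fin n)) : invCount σ⁻¹ = invCount σ := by
  unfold invCount
  refine card_bij' (fun p _ => (σ⁻¹ p.2, σ⁻¹ p.1)) (fun p _ => (σ p.2, σ p.1)) ?_ ?_
    (by simp) (by simp) <;>
  · intro p hp
    simp only [mem_filter, mem_univ, true_and] at hp ⊢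
    exact ⟨hp.2, by simpa using hp.1⟩

lemma swap_apply_lt_swap_apply {i j a b : Fin n} (hij : (i : ℕ) + 1 = j) (hab : a < b)
    (hne : ¬(a = i ∧ b = j)) : swap i j a < swap i j b := by
  simp only [Fin.lt_def, Fin.ext_iff] at *
  simp only [swap_apply_def]
  split_ifs <;> simp_all [Fin.ext_iff] <;> omega

/-- The swap adds the inversion `(i, j)` and transports all the others. -/
lemma invCount_mul_swap_of_lt (σ : Perm (Fin n)) {i j : Fin n} (hij : (i : ℕ) + 1 = j)
    (h : σ i < σ j) : invCount (σ * swap i j) = invCount σ + 1 := by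
  have hij' : i < j := Fin.lt_def.mpr (by omega)
  have hinversions : univ.filter (fun p : Fin n × Fin n =>
        p.1 < p.2 ∧ (σ * swap i j) p.2 < (σ * swap i j) p.1)
      = insert (i, j) ((univ.filter fun p : Fin n × Fin n => p.1 < p.2 ∧ σ p.2 < σ p.1).image
          fun p => (swap i j p.1, swap i j p.2)) := by
    ext p
    rw [mem_filter, mem_insert, mem_image]
    simp only [mem_filter, mem_univ, true_and, Perm.mul_apply]
    constructor
    · rintro ⟨hlt, hσ⟩
      by_cases hp : p = (i, j)
      · exact Or.inl hp
      · refine Or.inr ⟨(swap i j p.1, swap i j p.2),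
          ⟨swap_apply_lt_swap_apply hij hlt fun ⟨h1, h2⟩ => hp (Prod.ext h1 h2), hσ⟩, by simp⟩
    · rintro (rfl | ⟨q, ⟨hlt, hσ⟩, rfl⟩)
      · simpa using ⟨hij', h⟩
      · refine ⟨swap_apply_lt_swap_apply hij hlt ?_, by simpa using hσ⟩
        rintro ⟨rfl, rfl⟩
        exact asymm h hσ
  have hinj : Function.Injective fun p : Fin n × Fin n => (swap i j p.1, swap i j p.2) :=
    fun p q hpq => Prod.ext_iff.mpr (by simpa using hpq)
  rw [invCount, hinversions, card_insert_of_notMem, card_image_of_injective _ hinj, invCount]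
  intro hmem
  obtain ⟨q, hq, hqij⟩ := mem_image.mp hmem
  obtain ⟨rfl, rfl⟩ : q.1 = j ∧ q.2 = i := by simpa [swap_apply_eq_iff] using hqij
  exact asymm hij' (mem_filter.mp hq).2.1

lemma invCount_le_choose_add_choose (σ : Perm (Fin n)) (A : Finset (Fin n))
    (hA : ∀ p q, p < q → σ q < σ p → (p ∈ A ↔ q ∈ A)) :
    invCount σ ≤ (#A).choose 2 + (#Aᶜ).choose 2 := by
  rw [← card_product_filter_lt, ← card_product_filter_lt]
  refine (card_le_card fun p hp => ?_).trans (card_union_le _ _)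
  obtain ⟨hlt, hσ⟩ := (mem_filter.mp hp).2
  by_cases hpA : p.1 ∈ A
  · exact mem_union_left _ (by simp [hlt, hpA, (hA _ _ hlt hσ).mp hpA])
  · exact mem_union_right _ (by simp [hlt, hpA, mt (hA _ _ hlt hσ).mpr hpA])

/-- Measures the failure of the paper's condition that the value `v` sits at position at least
`s + 1 - v` (1-indexed). -/
def shortfall (s : ℕ) (σ : Perm (Fin n)) : ℕ :=
  ∑ p, (s - (p + σ p + 1))

def potential (s : ℕ) (σ : Perm (Fin n)) : ℕ :=
  invCount σ + 2 * shortfall s σ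

lemma shortfall_inv (s : ℕ) (σ : Perm (Fin n)) : shortfall s σ⁻¹ = shortfall s σ := by
  unfold shortfall
  rw [← Equiv.sum_comp σ]
  simp [add_comm]

lemma potential_inv (s : ℕ) (σ : Perm (Fin n)) : potential s σ⁻¹ = potential s σ := by
  rw [potential, potential, invCount_inv, shortfall_inv]

lemma shortfall_pos_of_lt (s : ℕ) (σ : Perm (Fin n)) (p : Fin n) (hp : p + σ p + 1 < s) :
    0 < shortfall s σ :=
  Finset.sum_pos' (fun _ _ => Nat.zero_le _) ⟨p, mem_univ p, by omega⟩

lemma sum_le_sum_add_of_eq_off_pair {α : Type*} [Fintype α] [DecidableEq α] (f g : α → ℕ)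
    {x y : α} (hxy : x ≠ y) (c : ℕ)
    (hfg : ∀ v, v ≠ x → v ≠ y → g v = f v) (hxy_le : g x + g y ≤ f x + f y + c) :
    ∑ v, g v ≤ ∑ v, f v + c := by
  have hsub : ({x, y} : Finset α) ⊆ univ := subset_univ _
  have hrest : ∑ v ∈ univ \ {x, y}, g v = ∑ v ∈ univ \ {x, y}, f v :=
    sum_congr rfl fun v hv => hfg v (by simp_all) (by simp_all)
  rw [← sum_sdiff hsub, ← sum_sdiff hsub (f := f), sum_pair hxy, sum_pair hxy, hrest]
  omega

lemma shortfall_mul_swap_le (s c : ℕ) (σ : Perm (Fin n)) {i j : Fin n} (hij : (i : ℕ) + 1 = j)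
    (h : (s - (i + σ j + 1)) + (s - (j + σ i + 1)) ≤
      (s - (i + σ i + 1)) + (s - (j + σ j + 1)) + c) :
    shortfall s (σ * swap i j) ≤ shortfall s σ + c := by
  have hne : i ≠ j := fun h => by simp [h] at hij
  refine sum_le_sum_add_of_eq_off_pair _ _ hne c (fun v hvi hvj => ?_) (by simpa using h)
  simp [swap_apply_of_ne_of_ne hvi hvj]

lemma potential_mul_swap_le (s : ℕ) (σ : Perm (Fin n)) {i j : Fin n} (hij : (i : ℕ) + 1 = j) :
    potential s (σ * swap i j) ≤ potential s σ + 1 := by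
  have hne : σ i ≠ σ j := fun h => by simp [σ.injective h] at hij
  rcases lt_or_gt_of_ne hne with hlt | hgt
  · have hinv := invCount_mul_swap_of_lt σ hij hlt
    have hshort := shortfall_mul_swap_le s 0 σ hij (by rw [Fin.lt_def] at hlt; omega)
    unfold potential
    omega
  · have hinv := invCount_mul_swap_of_lt (σ * swap i j) hij (by simpa using hgt)
    rw [mul_assoc, swap_mul_self, mul_one] at hinv
    have hshort := shortfall_mul_swap_le s 1 σ hij (by omega)
    unfold potential
    omega

lemma potential_swap_mul_le (s : ℕ) (σ : Perm (Fin n)) {i j : Fin n} (hij : (i : ℕ) + 1 = j) :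
    potential s (swap i j * σ) ≤ potential s σ + 1 := by
  rw [← potential_inv, mul_inv_rev, swap_inv, ← potential_inv s σ]
  exact potential_mul_swap_le s σ⁻¹ hij

lemma potential_mul_adjT_le (s : ℕ) (σ : Perm (Fin n)) (a : ℕ) :
    potential s (σ * adjT n a) ≤ potential s σ + 1 := by
  unfold adjT
  split_ifs with h
  · exact potential_mul_swap_le s σ (by simp; omega)
  · simp

lemma potential_adjT_mul_le (s : ℕ) (σ : Perm (Fin n)) (a : ℕ) :
    potential s (adjT n a * σ) ≤ potential s σ + 1 := by
  unfold adjT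
  split_ifs with h
  · exact potential_swap_mul_le s σ (by simp; omega)
  · simp

section Words

variable {M ι : Type*} [Monoid M] (Φ : M → ℕ) (f : ι → M) (c : ι → ℕ)

lemma apply_mul_prod_map_le (h : ∀ k x, Φ (x * f k) ≤ Φ x + c k) (l : List ι) (x : M) :
    Φ (x * (l.map f).prod) ≤ Φ x + (l.map c).sum := by
  induction l generalizing x with
  | nil => simp
  | cons k l ih =>
    rw [List.map_cons, List.prod_cons, ← mul_assoc, List.map_cons, List.sum_cons]
    have := h k x
    have := ih (x * f k)
    omega

lemma apply_prod_map_mul_le (h : ∀ k x, Φ (f k * x) ≤ Φ x + c k) (l : List ι) (x : M) :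
    Φ ((l.map f).prod * x) ≤ Φ x + (l.map c).sum := by
  induction l with
  | nil => simp
  | cons k l ih =>
    rw [List.map_cons, List.prod_cons, mul_assoc, List.map_cons, List.sum_cons]
    have := h k ((l.map f).prod * x)
    omega

end Words

lemma List.map_getD_range_length (l : List ℕ) :
    (List.range l.length).map (fun j => l.getD j 0) = l :=
  List.ext_getElem (by simp) fun j _ h => by simp [List.getElem?_eq_getElem h]

lemma potential_mul_ascWord_le (s : ℕ) (σ : Perm (Fin n)) (a m : ℕ) :
    potential s (σ * ascWord n a m) ≤ potential s σ + m := by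
  simpa [ascWord] using apply_mul_prod_map_le (potential s) (fun t => adjT n (a + t)) (fun _ => 1)
    (fun t x => potential_mul_adjT_le s x (a + t)) (List.range m) σ

lemma potential_descWord_mul_le (s : ℕ) (σ : Perm (Fin n)) (a m : ℕ) :
    potential s (descWord n a m * σ) ≤ potential s σ + m := by
  simpa [descWord, ← List.map_reverse] using
    apply_prod_map_mul_le (potential s) (fun t => adjT n (a + t)) (fun _ => 1)
      (fun t x => potential_adjT_mul_le s x (a + t)) (List.range m).reverse σ

lemma potential_mul_innerBlockWord_le (s : ℕ) (σ : Perm (Fin n)) (b : ℕ) (μ : List ℕ) :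
    potential s (σ * innerBlockWord n b μ) ≤ potential s σ + μ.sum := by
  have := apply_mul_prod_map_le (potential s) (fun j => ascWord n (b - j) (μ.getD j 0))
    (fun j => μ.getD j 0) (fun j x => potential_mul_ascWord_le s x _ _) (List.range μ.length) σ
  rwa [List.map_getD_range_length] at this

lemma potential_outerBlockWord_mul_le (s : ℕ) (σ : Perm (Fin n)) (b : ℕ) (ν : List ℕ) :
    potential s (outerBlockWord n b ν * σ) ≤ potential s σ + ν.sum := by
  have := apply_prod_map_mul_le (potential s) (fun j => descWord n (b - j) (ν.getD j 0))
    (fun j => ν.getD j 0) (fun j x => potential_descWord_mul_le s x _ _) (List.range ν.length) σ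
  rwa [List.map_getD_range_length] at this

lemma potential_le_of_minimal (s r : ℕ) (π₁ : Perm (Fin (s + r)))
    (hπ₁ : ∀ k : Fin (s + r), (π₁ k : ℕ) =
      if (k : ℕ) < s then s - 1 - (k : ℕ) else 2 * s + r - 1 - (k : ℕ)) :
    potential s π₁ ≤ s.choose 2 + r.choose 2 := by
  have hshort : shortfall s π₁ = 0 :=
    sum_eq_zero fun p _ => by have := hπ₁ p; split_ifs at this <;> omega
  have hinv := invCount_le_choose_add_choose π₁ {p | (p : ℕ) < s} fun p q hpq hσ => by
    have hp := hπ₁ p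
    have hq := hπ₁ q
    rw [Fin.lt_def] at hpq hσ
    simp only [mem_filter, mem_univ, true_and]
    split_ifs at hp hq <;> omega
  rw [card_compl, Fin.card_filter_val_lt, Fintype.card_fin] at hinv
  rw [potential, hshort]
  simpa using hinv

theorem stmt_18_general (s r Δ : ℕ) (hrs : r < s)
    (π : Equiv.Perm (Fin (s + r)))
    (hinv : invCount π = s.choose 2 + r.choose 2 + Δ)
    (i : ℕ) (hi1 : 1 ≤ i) (hir : i ≤ r)
    (hfix : ∀ h : i - 1 < s + r, ((π ⟨i - 1, h⟩ : Fin (s + r)) : ℕ) = r - i) :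
    ∀ π₁ : Equiv.Perm (Fin (s + r)),
      (∀ k : Fin (s + r), (π₁ k : ℕ) =
        if (k : ℕ) < s then s - 1 - (k : ℕ) else 2 * s + r - 1 - (k : ℕ)) →
      ¬ ∃ μ ν : List ℕ,
          μ.Pairwise (· ≥ ·) ∧ (∀ x ∈ μ, 0 < x) ∧
          ν.Pairwise (· ≥ ·) ∧ (∀ x ∈ ν, 0 < x) ∧
          μ.length ≤ s ∧ μ.headD 0 < r ∧
          ν.length ≤ s ∧ ν.headD 0 < r ∧
          μ.sum + ν.sum = Δ ∧
          π = outerBlockWord (s + r) s ν * π₁ * innerBlockWord (s + r) s μ := by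
  rintro π₁ hπ₁ ⟨μ, ν, -, -, -, -, -, -, -, -, hsize, hπ⟩
  have hreach : potential s π ≤ potential s π₁ + Δ := by
    have hout := potential_outerBlockWord_mul_le s (π₁ * innerBlockWord (s + r) s μ) s ν
    have hin := potential_mul_innerBlockWord_le s π₁ s μ
    rw [hπ, mul_assoc]
    omega
  have hmin := potential_le_of_minimal s r π₁ hπ₁
  have hpos : 0 < shortfall s π :=
    shortfall_pos_of_lt s π ⟨i - 1, by omega⟩ (by rw [hfix, Fin.val_mk]; omega)
  unfold potential at hreach hmin
  omega

/-- key disjointness claim in Theorem 3.8(ii): if a permutation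
`π` of shape `λ' = (s, r)` (with `s > r`) having `Δ < r` extra inversions
satisfies `π(i) = r + 1 - i` for some `1 ≤ i ≤ r` (0-indexed: the value at
position `i - 1` is `r - i`), then `π` does not arise from the minimal
permutation `π₁ = (s, …, 1, s+r, …, s+1)` by applying a jump partition
`(μ, ν)` of size `Δ` (inner action of `μ` and outer action of `ν` at the
block boundary `s`). -/
theorem stmt_18 (s r Δ : ℕ) (hr : 1 ≤ r) (hrs : r < s) (hΔ : Δ < r)
    (π : Equiv.Perm (Fin (s + r)))
    (hlis : lisLen π = 2) (hlds : ldsLen π = s)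
    (hinv : invCount π = s.choose 2 + r.choose 2 + Δ)
    (i : ℕ) (hi1 : 1 ≤ i) (hir : i ≤ r)
    (hfix : ∀ h : i - 1 < s + r, ((π ⟨i - 1, h⟩ : Fin (s + r)) : ℕ) = r - i) :
    ∀ π₁ : Equiv.Perm (Fin (s + r)),
      (∀ k : Fin (s + r), (π₁ k : ℕ) =
        if (k : ℕ) < s then s - 1 - (k : ℕ) else 2 * s + r - 1 - (k : ℕ)) →
      ¬ ∃ μ ν : List ℕ,
          μ.Pairwise (· ≥ ·) ∧ (∀ x ∈ μ, 0 < x) ∧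
          ν.Pairwise (· ≥ ·) ∧ (∀ x ∈ ν, 0 < x) ∧
          μ.length ≤ s ∧ μ.headD 0 < r ∧
          ν.length ≤ s ∧ ν.headD 0 < r ∧
          μ.sum + ν.sum = Δ ∧
          π = outerBlockWord (s + r) s ν * π₁ * innerBlockWord (s + r) s μ :=
  stmt_18_general s r Δ hrs π hinv i hi1 hir hfix
end
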